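/- If m ∈ H is odd, then m ∈ 𝒮₃^{(≤3)}; that is, every prime factor q of m is a 3-Higgs prime and v_q(m) ≤ 3. -/

import Mathlib

/-- The 3-Higgs primes (OEIS A057447): `2` is 3-Higgs (vacuously, since `2 - 1 = 1` has no
prime factors), and an odd prime `p` is 3-Higgs iff every prime `q ∣ p - 1` is 3-Higgs and
occurs in `p - 1` with exponent at most `3`. -/
inductive Higgs3 : ℕ → Prop
  | mk (p : ℕ) (hp : p.Prime)
      (hrec : ∀ q : ℕ, q.Prime → q ∣ (p - 1) → Higgs3 q)
      (hexp : ∀ q : ℕ, q.Prime → q ∣ (p - 1) → (p - 1).factorization q ≤ 3) :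
      Higgs3 p

/-- `H = { m ≥ 1 : every prime factor of 2^m + 1 is 3-Higgs }`. -/
def Hset : Set ℕ := {m | 1 ≤ m ∧ ∀ q : ℕ, q.Prime → q ∣ 2 ^ m + 1 → Higgs3 q}

/-- `H_even = H ∩ 2ℤ`. -/
def Heven : Set ℕ := Hset ∩ {m | 2 ∣ m}

/-- `𝒮₃^{(≤3)}`: positive integers all of whose prime factors are 3-Higgs and occur with
exponent at most `3`. -/
def S3 : Set ℕ := {n | 1 ≤ n ∧ ∀ q : ℕ, q.Prime → q ∣ n → Higgs3 q ∧ n.factorization q ≤ 3}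

/-!
Let `q` be a prime factor of the odd number `m ∈ H`, and suppose `q ^ (k + 1) ∣ m`. Then
`2 ^ q ^ (k + 1) + 1 ∣ 2 ^ m + 1`, and by lifting the exponent `2 ^ q ^ (k + 1) + 1` has a prime
factor `p` not dividing `2 ^ q ^ k + 1` (outside the case `q = 3`, `k = 0`). The order of `2`
modulo `p` is then divisible by `q ^ (k + 1)`, so `q ^ (k + 1) ∣ p - 1`, while `p` is 3-Higgs.
For `k = 0` this makes `q` a 3-Higgs prime; for `k = 3` it contradicts `v_q(p - 1) ≤ 3`.
-/

theorem Higgs3.prime {p : ℕ} (hp : Higgs3 p) : p.Prime := by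
  obtain ⟨_, hp, _, _⟩ := hp
  exact hp

theorem Higgs3.of_dvd_sub_one {p q : ℕ} (hp : Higgs3 p) (hq : q.Prime) (hqp : q ∣ p - 1) :
    Higgs3 q := by
  obtain ⟨_, _, hrec, _⟩ := hp
  exact hrec q hq hqp

theorem Higgs3.factorization_sub_one_le {p : ℕ} (hp : Higgs3 p) (q : ℕ) :
    (p - 1).factorization q ≤ 3 := by
  obtain ⟨_, _, _, hexp⟩ := hp
  by_cases hq : q.Prime
  · by_cases hqp : q ∣ p - 1
    · exact hexp q hq hqp
    · simp [Nat.factorization_eq_zero_of_not_dvd hqp]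
  · simp [Nat.factorization_eq_zero_of_not_prime _ hq]

theorem higgs3_two : Higgs3 2 :=
  ⟨2, Nat.prime_two, fun _ hq h => absurd (Nat.dvd_one.mp h) hq.ne_one,
    fun _ hq h => absurd (Nat.dvd_one.mp h) hq.ne_one⟩

theorem higgs3_three : Higgs3 3 := by
  refine ⟨3, Nat.prime_three, fun q hq h => ?_, fun q hq h => ?_⟩
  · rw [(Nat.prime_dvd_prime_iff_eq hq Nat.prime_two).mp h]
    exact higgs3_two
  · rw [(Nat.prime_dvd_prime_iff_eq hq Nat.prime_two).mp h]
    simp [Nat.Prime.factorization_self Nat.prime_two]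

theorem Odd.pow_add_one_dvd_pow_add_one {d m : ℕ} (x : ℕ) (hm : Odd m) (hd : d ∣ m) :
    x ^ d + 1 ∣ x ^ m + 1 := by
  obtain ⟨t, rfl⟩ := hd
  simpa [pow_mul] using (hm.of_dvd_nat (dvd_mul_left t d)).nat_add_dvd_pow_add_pow (x ^ d) 1

/-- By lifting the exponent, an odd prime `r ∣ x + 1` has `v_r(x ^ n + 1) = v_r((x + 1) * n)`, so
without a new prime factor `x ^ n + 1` would divide `(x + 1) * n`. -/
theorem exists_prime_dvd_pow_add_one_not_dvd_add_one {x n : ℕ} (hx : Even x) (hn : Odd n)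
    (hsize : (x + 1) * n < x ^ n + 1) :
    ∃ p, p.Prime ∧ p ∣ x ^ n + 1 ∧ ¬p ∣ x + 1 := by
  by_contra! hcon
  have hn0 : n ≠ 0 := hn.pos.ne'
  suffices x ^ n + 1 ∣ (x + 1) * n from (Nat.le_of_dvd (by positivity) this).not_gt hsize
  refine (Nat.factorization_prime_le_iff_dvd (by positivity) (by positivity)).mp fun r hr => ?_
  by_cases hrN : r ∣ x ^ n + 1
  · have hrx : r ∣ x + 1 := hcon r hr hrN
    have hrodd : Odd r := ((hx.pow_of_ne_zero hn0).add_one).of_dvd_nat hrN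
    have hrx' : ¬r ∣ x := fun h => hr.one_lt.ne' (Nat.dvd_one.mp ((Nat.dvd_add_right h).mp hrx))
    have : Fact r.Prime := ⟨hr⟩
    have hlte := padicValNat.pow_add_pow hrodd (y := 1) hrx hrx' hn
    rw [one_pow] at hlte
    rw [Nat.factorization_def _ hr, Nat.factorization_def _ hr, hlte,
      padicValNat.mul (by positivity) hn0]
  · simp [Nat.factorization_eq_zero_of_not_dvd hrN]

theorem pow_dvd_orderOf_of_pow_eq_neg_one {R : Type*} [CommRing R] [IsDomain R] {x : R}
    {q k : ℕ} (hq : q.Prime) (hx : x ^ q ^ (k + 1) = -1) (hx' : x ^ q ^ k ≠ -1) :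
    q ^ (k + 1) ∣ orderOf x := by
  by_contra hndvd
  have hord : orderOf x ∣ q ^ (k + 1) * 2 :=
    orderOf_dvd_of_pow_eq_one (by rw [pow_mul, hx, neg_one_sq])
  obtain ⟨y, z, hy, hz, hyz⟩ := Nat.dvd_mul.mp hord
  obtain ⟨j, hj, rfl⟩ := (Nat.dvd_prime_pow hq).mp hy
  have hjk : j ≤ k := by
    refine Nat.lt_succ_iff.mp (lt_of_le_of_ne hj fun hj => hndvd ?_)
    rw [← hyz, hj]
    exact dvd_mul_right _ _
  have hsq : (x ^ q ^ k) ^ 2 = 1 := by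
    rw [← pow_mul, ← orderOf_dvd_iff_pow_eq_one, ← hyz]
    exact mul_dvd_mul (pow_dvd_pow q hjk) hz
  have hone : x ^ q ^ k = 1 := (sq_eq_one_iff.mp hsq).resolve_right hx'
  have : (-1 : R) = 1 := by rw [← hx, pow_succ, pow_mul, hone, one_pow]
  exact hx' (hone.trans this.symm)

theorem pow_dvd_sub_one_of_dvd_pow_add_one {p q k x : ℕ} (hp : p.Prime) (hq : q.Prime)
    (hdvd : p ∣ x ^ q ^ (k + 1) + 1) (hndvd : ¬p ∣ x ^ q ^ k + 1) : q ^ (k + 1) ∣ p - 1 := by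
  have : Fact p.Prime := ⟨hp⟩
  have hx : (x : ZMod p) ^ q ^ (k + 1) = -1 := by
    refine eq_neg_of_add_eq_zero_left ?_
    exact_mod_cast (ZMod.natCast_eq_zero_iff _ p).mpr hdvd
  have hx' : (x : ZMod p) ^ q ^ k ≠ -1 := fun h => hndvd <| by
    rw [← ZMod.natCast_eq_zero_iff]
    push_cast
    rw [h, neg_add_cancel]
  have hx0 : (x : ZMod p) ≠ 0 := by
    rintro h
    rw [h, zero_pow (pow_ne_zero _ hq.ne_zero)] at hx
    exact one_ne_zero (neg_eq_zero.mp hx.symm)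
  exact (pow_dvd_orderOf_of_pow_eq_neg_one hq hx hx').trans (ZMod.orderOf_dvd_card_sub_one hx0)

theorem three_mul_lt_two_pow_add_one {n : ℕ} (hn : 5 ≤ n) : 3 * n < 2 ^ n + 1 := by
  induction n, hn using Nat.le_induction with
  | base => norm_num
  | succ n hn ih => rw [pow_succ]; omega

theorem add_one_mul_lt_pow_add_one {a n : ℕ} (ha : 3 ≤ a) (hn : 3 ≤ n) :
    (a + 1) * n < a ^ n + 1 := by
  induction n, hn using Nat.le_induction with
  | base => nlinarith [Nat.mul_le_mul ha ha]
  | succ n hn ih =>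
    have : a + 1 ≤ 2 * a ^ n := by
      have := Nat.le_self_pow (by omega : n ≠ 0) a
      omega
    rw [pow_succ]
    nlinarith

theorem exists_higgs3_pow_dvd_sub_one {m q k : ℕ} (hm : m ∈ Hset) (hodd : Odd m)
    (hq : q.Prime) (hqm : q ^ (k + 1) ∣ m) (hsize : (2 ^ q ^ k + 1) * q < 2 ^ q ^ (k + 1) + 1) :
    ∃ p, Higgs3 p ∧ q ^ (k + 1) ∣ p - 1 := by
  have hqodd : Odd q := hodd.of_dvd_nat ((dvd_pow_self q k.succ_ne_zero).trans hqm)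
  rw [pow_succ, pow_mul] at hsize
  obtain ⟨p, hp, hpN, hpM⟩ := exists_prime_dvd_pow_add_one_not_dvd_add_one
    (even_two.pow_of_ne_zero (pow_ne_zero k hq.ne_zero)) hqodd hsize
  rw [← pow_mul, ← pow_succ] at hpN
  exact ⟨p, hm.2 p hp (hpN.trans (hodd.pow_add_one_dvd_pow_add_one 2 hqm)),
    pow_dvd_sub_one_of_dvd_pow_add_one hp hq hpN hpM⟩

/-- If `m ∈ H` is odd, then `m ∈ 𝒮₃^{(≤3)}`: every prime factor `q` of `m` is a
3-Higgs prime and `v_q(m) ≤ 3`. -/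
theorem odd_mem_H_mem_S3 (m : ℕ) (hm : m ∈ Hset) (hodd : Odd m) : m ∈ S3 := by
  refine ⟨hm.1, fun q hq hqm => ?_⟩
  have hqodd := Nat.odd_iff.mp (hodd.of_dvd_nat hqm)
  have hq2 := hq.two_le
  refine ⟨?_, ?_⟩
  · obtain rfl | hq5 : q = 3 ∨ 5 ≤ q := by omega
    · exact higgs3_three
    · obtain ⟨p, hp, hqp⟩ := exists_higgs3_pow_dvd_sub_one (k := 0) hm hodd hq (by simpa)
        (by simpa using three_mul_lt_two_pow_add_one hq5)
      exact hp.of_dvd_sub_one hq (by simpa using hqp)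
  · by_contra! h
    have hq4 : q ^ (3 + 1) ∣ m := (hq.pow_dvd_iff_le_factorization hodd.pos.ne').2 h
    have hq3 : 2 ≤ q ^ 3 := hq2.trans (Nat.le_self_pow three_ne_zero q)
    have ha : 3 ≤ 2 ^ q ^ 3 := (Nat.pow_le_pow_right two_pos hq3).trans' (by norm_num)
    obtain ⟨p, hp, hqp⟩ := exists_higgs3_pow_dvd_sub_one hm hodd hq hq4
      (add_one_mul_lt_pow_add_one ha (by omega) |>.trans_eq (by rw [← pow_mul, ← pow_succ]))
    have := (hq.pow_dvd_iff_le_factorization (Nat.sub_ne_zero_of_lt hp.prime.one_lt)).1 hqp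
    have := hp.factorization_sub_one_le q
    omega
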